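/- The multiple-reader single-writer lock invariant for S2PL: in every reachable state of the S2PL protocol model, for every key k, if some transaction t has svr_state(k,t) = write_lock then no other transaction t' ≠ t has svr_state(k,t') ∈ {read_lock, write_lock}. -/
import Mathlib


/-- Per-transaction server states of the S2PL protocol. -/
inductive VSt
  | working | prepared | read_lock | write_lock | not_okay | committed | aborted
deriving DecidableEq

/-- Global server state: per key and transaction. -/
abbrev St (K T : Type*) := K → T → VSt

/-- Update the state of transaction `t` on key `k`. -/
def upd {K T : Type*} [DecidableEq K] [DecidableEq T]
    (st : St K T) (k : K) (t : T) (v : VSt) : St K T :=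
  fun k' t' => if k' = k ∧ t' = t then v else st k' t'

/-- Transitions of (the server side of) the S2PL protocol model. -/
inductive S2PLStep {K T : Type*} [DecidableEq K] [DecidableEq T] :
    St K T → St K T → Prop
  | prepare (st : St K T) (k : K) (t : T) :
      st k t = .working → S2PLStep st (upd st k t .prepared)
  | acq_rd_lock (st : St K T) (k : K) (t : T) :
      st k t = .prepared → (∀ t', st k t' ≠ .write_lock) →
      S2PLStep st (upd st k t .read_lock)
  | acq_wr_lock (st : St K T) (k : K) (t : T) :
      st k t = .prepared →
      (∀ t', st k t' ≠ .read_lock ∧ st k t' ≠ .write_lock) →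
      S2PLStep st (upd st k t .write_lock)
  | nok (st : St K T) (k : K) (t : T) :
      st k t = .prepared → S2PLStep st (upd st k t .not_okay)
  | commit (st : St K T) (k : K) (t : T) :
      (st k t = .read_lock ∨ st k t = .write_lock) →
      S2PLStep st (upd st k t .committed)
  | abort (st : St K T) (k : K) (t : T) :
      (st k t = .prepared ∨ st k t = .read_lock ∨ st k t = .write_lock ∨
        st k t = .not_okay) →
      S2PLStep st (upd st k t .aborted)

/-- Reachable states: initially all transaction states are `working`. -/
inductive S2PLReach {K T : Type*} [DecidableEq K] [DecidableEq T] : St K T → Prop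
  | init : S2PLReach (fun _ _ => VSt.working)
  | step : ∀ st st', S2PLReach st → S2PLStep st st' → S2PLReach st'

/-- the multiple-reader single-writer lock invariant: whenever a
transaction holds a write lock on a key, no other transaction holds a read or
write lock on that key. -/
theorem write_lock_exclusive {K T : Type*} [DecidableEq K] [DecidableEq T]
    (st : St K T) (h : S2PLReach st) :
    ∀ (k : K) (t t' : T), st k t = .write_lock → t' ≠ t →
      st k t' ≠ .read_lock ∧ st k t' ≠ .write_lock := by
  induction h with
  | init => intro k t t' hw _; simp at hw
  | step st st' hr hstep ih =>
    intro k t t' hw hne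
    cases hstep with
    | prepare k0 t0 hp =>
      by_cases h1 : k = k0 ∧ t = t0
      · obtain ⟨e1, e2⟩ := h1; subst e1; subst e2
        simp only [upd, and_self, if_true] at hw
        simp at hw
      · simp only [upd, if_neg h1] at hw
        by_cases h2 : k = k0 ∧ t' = t0
        · obtain ⟨e1, e2⟩ := h2; subst e1; subst e2
          simp only [upd, and_self, if_true]
          simp
        · simp only [upd, if_neg h1, if_neg h2]
          exact ih k t t' hw hne
    | acq_rd_lock k0 t0 hp hg =>
      by_cases h1 : k = k0 ∧ t = t0
      · obtain ⟨e1, e2⟩ := h1; subst e1; subst e2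
        simp only [upd, and_self, if_true] at hw
        simp at hw
      · simp only [upd, if_neg h1] at hw
        by_cases h2 : k = k0 ∧ t' = t0
        · obtain ⟨e1, e2⟩ := h2; subst e1; subst e2
          simp only [upd, and_self, if_true]
          exact absurd hw (hg t)
        · simp only [upd, if_neg h1, if_neg h2]
          exact ih k t t' hw hne
    | acq_wr_lock k0 t0 hp hg =>
      by_cases h1 : k = k0 ∧ t = t0
      · obtain ⟨e1, e2⟩ := h1; subst e1; subst e2
        simp only [upd]
        rw [if_neg (by simp [hne])]
        exact hg t'
      · simp only [upd, if_neg h1] at hw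
        by_cases h2 : k = k0 ∧ t' = t0
        · obtain ⟨e1, e2⟩ := h2; subst e1; subst e2
          exact absurd hw (hg t).2
        · simp only [upd, if_neg h1, if_neg h2]
          exact ih k t t' hw hne
    | nok k0 t0 hp =>
      by_cases h1 : k = k0 ∧ t = t0
      · obtain ⟨e1, e2⟩ := h1; subst e1; subst e2
        simp only [upd, and_self, if_true] at hw
        simp at hw
      · simp only [upd, if_neg h1] at hw
        by_cases h2 : k = k0 ∧ t' = t0
        · obtain ⟨e1, e2⟩ := h2; subst e1; subst e2
          simp only [upd, and_self, if_true]
          simp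
        · simp only [upd, if_neg h1, if_neg h2]
          exact ih k t t' hw hne
    | commit k0 t0 hp =>
      by_cases h1 : k = k0 ∧ t = t0
      · obtain ⟨e1, e2⟩ := h1; subst e1; subst e2
        simp only [upd, and_self, if_true] at hw
        simp at hw
      · simp only [upd, if_neg h1] at hw
        by_cases h2 : k = k0 ∧ t' = t0
        · obtain ⟨e1, e2⟩ := h2; subst e1; subst e2
          simp only [upd, and_self, if_true]
          simp
        · simp only [upd, if_neg h1, if_neg h2]
          exact ih k t t' hw hne
    | abort k0 t0 hp =>
      by_cases h1 : k = k0 ∧ t = t0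
      · obtain ⟨e1, e2⟩ := h1; subst e1; subst e2
        simp only [upd, and_self, if_true] at hw
        simp at hw
      · simp only [upd, if_neg h1] at hw
        by_cases h2 : k = k0 ∧ t' = t0
        · obtain ⟨e1, e2⟩ := h2; subst e1; subst e2
          simp only [upd, and_self, if_true]
          simp
        · simp only [upd, if_neg h1, if_neg h2]
          exact ih k t t' hw hne
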